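/- Let f : 2^N → ℝ≥0 be a non-negative submodular function, let A_1, …, A_ℓ be subsets of N, and let p ∈ [0,1]. Let A_i(p) denote an independent random subset of A_i containing each element with probability p independently. Then E[f(∪_{i=1}^ℓ A_i(p))] ≥ Σ_{I ⊆ [ℓ]} p^{|I|}(1−p)^{ℓ−|I|} · f(∪_{i∈I} A_i). -/

import Mathlib

/-!
For one set, `E[f(A(p))] ≥ (1 - p) f(∅) + p f(A)`: induct on `A`, averaging out one element
`a`; the averaged function `B ↦ (1 - p) f(B) + p f(B ∪ {a})` is again submodular, and the error
term `p(1 - p)(f{a} + f(s) - f(∅) - f(s ∪ {a}))` is non-negative by submodularity on the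
disjoint pair `{a}, s`. For the union, condition on `A₁(p) = B₀`: since `f(B₀ ∪ ·)` is
submodular, induction on `ℓ` replaces `A₂(p), …, A_ℓ(p)` by the two-point laws
"`Aᵢ` with probability `p`, else `∅`"; then for each such outcome `D` the one-set bound applied
to the submodular `f(D ∪ ·)` does the same for `A₁(p)`.
-/

open Finset

def IsSubmodular {α : Type*} [Lattice α] (f : α → ℝ) : Prop :=
  ∀ S T, f (S ⊔ T) + f (S ⊓ T) ≤ f S + f T

namespace IsSubmodular

variable {α : Type*}

theorem add [Lattice α] {f g : α → ℝ} (hf : IsSubmodular f) (hg : IsSubmodular g) :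
    IsSubmodular (f + g) := fun S T => by
  have := hf S T; have := hg S T; simp only [Pi.add_apply]; linarith

theorem const_mul [Lattice α] {f : α → ℝ} (hf : IsSubmodular f) {c : ℝ} (hc : 0 ≤ c) :
    IsSubmodular (fun S => c * f S) := fun S T => by
  have := mul_le_mul_of_nonneg_left (hf S T) hc; linarith

theorem sup_left [DistribLattice α] {f : α → ℝ} (hf : IsSubmodular f) (D : α) :
    IsSubmodular (fun S => f (D ⊔ S)) := fun S T => by
  have := hf (D ⊔ S) (D ⊔ T)
  rwa [← sup_sup_distrib_left, ← sup_inf_left] at this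

end IsSubmodular

theorem Fin.sum_finset_succ {M : Type*} [AddCommMonoid M] {n : ℕ}
    (g : Finset (Fin (n + 1)) → M) :
    ∑ J, g J = ∑ I : Finset (Fin n),
      (g (I.map (Fin.succEmb n)) + g (insert 0 (I.map (Fin.succEmb n)))) := by
  rw [← powerset_univ, Fin.univ_succ, cons_eq_insert, sum_powerset_insert (by simp),
    ← sum_add_distrib, map_eq_image, powerset_image, sum_image, powerset_univ]
  · simp only [map_eq_image]
    rfl
  · exact image_injOn_powerset_of_injOn (Fin.succ_injective n).injOn

theorem Fin.univ_biUnion_cons {α : Type*} [DecidableEq α] {n : ℕ} (B₀ : Finset α)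
    (B : Fin n → Finset α) :
    univ.biUnion (Fin.cons B₀ B : Fin (n + 1) → Finset α) = B₀ ∪ univ.biUnion B := by
  ext; simp [Fin.exists_fin_succ]

section Sampling

variable {N : Type*} [DecidableEq N] {f : Finset N → ℝ} {p : ℝ}

theorem IsSubmodular.convex_comb_le_sum_powerset (hf : IsSubmodular f) (hp0 : 0 ≤ p)
    (hp1 : p ≤ 1) (A : Finset N) :
    (1 - p) * f ∅ + p * f A ≤ ∑ B ∈ A.powerset, p ^ #B * (1 - p) ^ (#A - #B) * f B := by
  induction A using Finset.induction_on generalizing f with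
  | empty => simp; linarith
  | insert a s ha ih =>
    have hq : 0 ≤ 1 - p := sub_nonneg.2 hp1
    set g : Finset N → ℝ := fun S => (1 - p) * f S + p * f (insert a S)
    have hg : IsSubmodular g := by
      have hins : IsSubmodular (fun S => f (insert a S)) := by
        simp only [insert_eq]
        exact hf.sup_left {a}
      exact (hf.const_mul hq).add (hins.const_mul hp0)
    have hsplit : ∑ B ∈ (insert a s).powerset, p ^ #B * (1 - p) ^ (#(insert a s) - #B) * f B =
        ∑ B ∈ s.powerset, p ^ #B * (1 - p) ^ (#s - #B) * g B := by
      rw [sum_powerset_insert ha, ← sum_add_distrib]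
      refine sum_congr rfl fun B hB => ?_
      have hBs : B ⊆ s := mem_powerset.1 hB
      rw [card_insert_of_notMem ha, card_insert_of_notMem (fun h => ha (hBs h)),
        Nat.add_sub_add_right, Nat.sub_add_comm (card_le_card hBs)]
      ring
    have hgap : f (insert a s) + f ∅ ≤ f {a} + f s := by
      have hdisj : ({a} : Finset N) ∩ s = ∅ :=
        disjoint_iff_inter_eq_empty.1 (disjoint_singleton_left.2 ha)
      simpa [← insert_eq, hdisj] using hf {a} s
    calc (1 - p) * f ∅ + p * f (insert a s)
        ≤ (1 - p) * g ∅ + p * g s := by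
          have := mul_nonneg (mul_nonneg hp0 hq) (sub_nonneg.2 hgap)
          simp only [g, insert_empty]
          nlinarith
      _ ≤ _ := ih hg
      _ = _ := hsplit.symm

/-- `P[A(p) = B]`, where `A(p)` keeps each element of `A` independently with probability `p`. -/
def sampleProb (p : ℝ) (A B : Finset N) : ℝ :=
  if B ⊆ A then p ^ #B * (1 - p) ^ (#A - #B) else 0

theorem sampleProb_nonneg (hp0 : 0 ≤ p) (hp1 : p ≤ 1) (A B : Finset N) :
    0 ≤ sampleProb p A B := by
  unfold sampleProb
  split_ifs
  · exact mul_nonneg (pow_nonneg hp0 _) (pow_nonneg (sub_nonneg.2 hp1) _)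
  · exact le_rfl

theorem sum_sampleProb_mul [Fintype N] (A : Finset N) (g : Finset N → ℝ) :
    ∑ B, sampleProb p A B * g B = ∑ B ∈ A.powerset, p ^ #B * (1 - p) ^ (#A - #B) * g B := by
  simp only [sampleProb, ite_mul, zero_mul, sum_ite, sum_const_zero, add_zero,
    filter_subset_univ]

theorem IsSubmodular.convex_comb_le_sum_sampleProb [Fintype N] (hf : IsSubmodular f)
    (hp0 : 0 ≤ p) (hp1 : p ≤ 1) (A : Finset N) :
    (1 - p) * f ∅ + p * f A ≤ ∑ B, sampleProb p A B * f B := by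
  rw [sum_sampleProb_mul]
  exact hf.convex_comb_le_sum_powerset hp0 hp1 A

theorem IsSubmodular.sum_pow_mul_biUnion_le_sum_sampleProb [Fintype N] (hf : IsSubmodular f)
    (hp0 : 0 ≤ p) (hp1 : p ≤ 1) {ℓ : ℕ} (A : Fin ℓ → Finset N) :
    ∑ I : Finset (Fin ℓ), p ^ #I * (1 - p) ^ (ℓ - #I) * f (I.biUnion A) ≤
      ∑ B : Fin ℓ → Finset N, (∏ i, sampleProb p (A i) (B i)) * f (univ.biUnion B) := by
  induction ℓ generalizing f with
  | zero => simp [Subsingleton.elim _ (∅ : Finset (Fin 0))]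
  | succ n ih =>
    set D : Finset (Fin n) → Finset N := fun I => I.biUnion fun i => A i.succ
    have hRHS : ∑ J : Finset (Fin (n + 1)), p ^ #J * (1 - p) ^ (n + 1 - #J) * f (J.biUnion A) =
        ∑ I : Finset (Fin n), p ^ #I * (1 - p) ^ (n - #I) *
          ((1 - p) * f (D I) + p * f (A 0 ∪ D I)) := by
      rw [Fin.sum_finset_succ]
      refine sum_congr rfl fun I _ => ?_
      have hI : #I ≤ n := by simpa using card_le_univ I
      have hmap : (I.map (Fin.succEmb n)).biUnion A = D I := by ext; simp [D]
      rw [card_insert_of_notMem (by simp), biUnion_insert, card_map, hmap,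
        Nat.add_sub_add_right, Nat.succ_sub hI, pow_succ]
      ring
    have hLHS :
        ∑ B : Fin (n + 1) → Finset N, (∏ i, sampleProb p (A i) (B i)) * f (univ.biUnion B) =
        ∑ B₀, sampleProb p (A 0) B₀ * ∑ B : Fin n → Finset N,
          (∏ i, sampleProb p (A i.succ) (B i)) * f (B₀ ∪ univ.biUnion B) := by
      rw [← (Fin.consEquiv _).sum_comp, Fintype.sum_prod_type]
      change ∑ B₀, ∑ B, (∏ i, sampleProb p (A i) (Fin.cons B₀ B i)) *
        f (univ.biUnion (Fin.cons B₀ B)) = _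
      simp only [Fin.prod_univ_succ, Fin.cons_zero, Fin.cons_succ,
        Fin.univ_biUnion_cons, mul_sum, mul_assoc]
    calc _ = _ := hRHS
      _ ≤ ∑ I : Finset (Fin n), p ^ #I * (1 - p) ^ (n - #I) *
            ∑ B₀, sampleProb p (A 0) B₀ * f (D I ∪ B₀) := by
          refine sum_le_sum fun I _ => mul_le_mul_of_nonneg_left ?_ (by positivity)
          simpa [union_comm] using (hf.sup_left (D I)).convex_comb_le_sum_sampleProb hp0 hp1 (A 0)
      _ = ∑ B₀, sampleProb p (A 0) B₀ * ∑ I : Finset (Fin n),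
            p ^ #I * (1 - p) ^ (n - #I) * f (B₀ ∪ D I) := by
          simp only [mul_sum]
          rw [sum_comm]
          refine sum_congr rfl fun _ _ => sum_congr rfl fun _ _ => by rw [union_comm]; ring
      _ ≤ _ := sum_le_sum fun B₀ _ => mul_le_mul_of_nonneg_left (ih (hf.sup_left B₀) _)
            (sampleProb_nonneg hp0 hp1 _ _)
      _ = _ := hLHS.symm

end Sampling

theorem expected_value_union_independent_samples_general {N : Type*} [Fintype N] [DecidableEq N]
    (f : Finset N → ℝ)
    (hsub : ∀ S T : Finset N, f S + f T ≥ f (S ∪ T) + f (S ∩ T))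
    (ℓ : ℕ) (A : Fin ℓ → Finset N) (p : ℝ) (hp0 : 0 ≤ p) (hp1 : p ≤ 1) :
    ∑ B : Fin ℓ → Finset N,
        (∏ i : Fin ℓ,
          if B i ⊆ A i then p ^ (B i).card * (1 - p) ^ ((A i).card - (B i).card)
          else 0) * f (Finset.univ.biUnion B) ≥
      ∑ I : Finset (Fin ℓ), p ^ I.card * (1 - p) ^ (ℓ - I.card) * f (I.biUnion A) :=
  IsSubmodular.sum_pow_mul_biUnion_le_sum_sampleProb hsub hp0 hp1 A

/-- for a non-negative submodular `f`, sets `A 0, …, A (ℓ-1)` and `p ∈ [0,1]`,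
if each `A i (p)` is an independent random subset of `A i` containing each element with
probability `p` independently, then
`E[f(∪_i A_i(p))] ≥ Σ_{I ⊆ [ℓ]} p^{|I|}(1−p)^{ℓ−|I|} · f(∪_{i∈I} A_i)`.
The expectation on the left is written explicitly as a sum over the joint outcomes
`B : Fin ℓ → Finset N` (with `B i ⊆ A i`), weighted by their probabilities. -/
theorem expected_value_union_independent_samples {N : Type*} [Fintype N] [DecidableEq N]
    (f : Finset N → ℝ)
    (hnonneg : ∀ S : Finset N, 0 ≤ f S)
    (hsub : ∀ S T : Finset N, f S + f T ≥ f (S ∪ T) + f (S ∩ T))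
    (ℓ : ℕ) (A : Fin ℓ → Finset N) (p : ℝ) (hp0 : 0 ≤ p) (hp1 : p ≤ 1) :
    ∑ B : Fin ℓ → Finset N,
        (∏ i : Fin ℓ,
          if B i ⊆ A i then p ^ (B i).card * (1 - p) ^ ((A i).card - (B i).card)
          else 0) * f (Finset.univ.biUnion B) ≥
      ∑ I : Finset (Fin ℓ), p ^ I.card * (1 - p) ^ (ℓ - I.card) * f (I.biUnion A) :=
  expected_value_union_independent_samples_general f hsub ℓ A p hp0 hp1
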